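/- arXiv:1112.3589 — 2 statements merged into one kernel-verified Lean document; each statement's English description precedes it below -/
import Mathlib

section
/- Let λ>0 and let (x,y,z)∈ℝ³ with z>0 and M(x,y)=max(|x|,|y|)≠0. Then T_λ(x,y,z) is a finite point (u,v,w)∈ℝ³ with w>0, and max(|u|,|v|)/w < max(|x|,|y|)/z. (In other words, the quantity ρ(x,y,z)=M(x,y)/z strictly decreases under T_λ on the upper half-space off the z-axis.) -/
noncomputable section

open Real Filter Topology Set MeasureTheory
open scoped Classical OnePoint

abbrev R3 := EuclideanSpace ℝ (Fin 3)

/-- The point (x,y,z) ∈ ℝ³. -/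
def mk3 (x y z : ℝ) : R3 := (EuclideanSpace.equiv (Fin 3) ℝ).symm ![x, y, z]

/-- M(x,y) = max(|x|,|y|). -/
def Mxy (x y : ℝ) : ℝ := max |x| |y|

/-- The map T₀ on the beam X = [−π/4,π/4]² × ℝ. -/
def T0 (x y z : ℝ) : R3 :=
  if x = 0 ∧ y = 0 then mk3 0 0 (Real.tanh z)
  else
    mk3 (x * Real.cos (Mxy x y) * Real.sin (Mxy x y) /
          (Real.sqrt (x ^ 2 + y ^ 2) * (Real.cos (Mxy x y) ^ 2 + Real.sinh z ^ 2)))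
        (y * Real.cos (Mxy x y) * Real.sin (Mxy x y) /
          (Real.sqrt (x ^ 2 + y ^ 2) * (Real.cos (Mxy x y) ^ 2 + Real.sinh z ^ 2)))
        (Real.sinh z * Real.cosh z / (Real.cos (Mxy x y) ^ 2 + Real.sinh z ^ 2))

/-- j(t) = ⌊(t+π/4)/(π/2)⌋. -/
def jfold (t : ℝ) : ℤ := ⌊(t + Real.pi / 4) / (Real.pi / 2)⌋

/-- t̂ = (−1)^{j(t)}·(t − j(t)·π/2), the folding of ℝ onto [−π/4,π/4] by reflections. -/
def fold (t : ℝ) : ℝ := (-1 : ℝ) ^ jfold t * (t - jfold t * (Real.pi / 2))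

/-- The generalized tangent map T : ℝ³ → ℝ³ ∪ {∞} (one-point compactification). -/
def Tmap (v : R3) : OnePoint R3 :=
  let w := T0 (fold (v 0)) (fold (v 1)) (v 2)
  if Even (jfold (v 0) + jfold (v 1)) then (w : OnePoint R3)
  else if w = 0 then ∞ else (((‖w‖ ^ 2)⁻¹ • w : R3) : OnePoint R3)

/-- T_λ = λ·T, with λ·∞ = ∞. -/
def Tl (l : ℝ) (v : R3) : OnePoint R3 := Option.map (fun w => l • w) (Tmap v)

/-- The extension of T_λ to ℝ³ ∪ {∞} sending ∞ ↦ ∞, so that iterates are defined;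
`(TlHat l)^[k] ↑x ≠ ∞` says the orbit of x has not hit ∞ within the first k steps. -/
def TlHat (l : ℝ) (p : OnePoint R3) : OnePoint R3 := Option.bind p (Tl l)

/-! Every branch of T is a positive multiple of `T₀ ∘ fold` (inversion in the unit sphere
rescales along rays), and `ρ = max(|u|,|v|)/w` is invariant under positive scaling. So it
suffices to bound ρ on `T₀`: there `ρ(T₀(a,b,z)) = M cos M sin M / (√(a²+b²) sinh z cosh z)`
with `M = max(|a|,|b|) ≤ √(a²+b²)`, which is at most `sin M / sinh z < M / z`; finally folding
does not increase `max(|x|,|y|)`. -/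

def rho (w : R3) : ℝ := max |w 0| |w 1| / w 2

@[simp] lemma mk3_apply_zero (x y z : ℝ) : mk3 x y z 0 = x := rfl

@[simp] lemma mk3_apply_one (x y z : ℝ) : mk3 x y z 1 = y := rfl

@[simp] lemma mk3_apply_two (x y z : ℝ) : mk3 x y z 2 = z := rfl

lemma rho_smul {c : ℝ} (hc : 0 < c) (w : R3) : rho (c • w) = rho w := by
  simp only [rho, PiLp.smul_apply, smul_eq_mul, abs_mul, abs_of_pos hc,
    ← mul_max_of_nonneg _ _ hc.le]
  exact mul_div_mul_left _ _ hc.ne'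

lemma jfold_mul_le (t : ℝ) : jfold t * (π / 2) ≤ t + π / 4 :=
  (le_div_iff₀ (by positivity)).mp (Int.floor_le _)

lemma lt_jfold_add_one_mul (t : ℝ) : t + π / 4 < (jfold t + 1) * (π / 2) :=
  (div_lt_iff₀ (by positivity)).mp (Int.lt_floor_add_one _)

lemma abs_fold (t : ℝ) : |fold t| = |t - jfold t * (π / 2)| := by
  rw [fold, abs_mul, abs_zpow, abs_neg, abs_one, one_zpow, one_mul]

lemma abs_fold_le_pi_div_four (t : ℝ) : |fold t| ≤ π / 4 := by
  rw [abs_fold, abs_le]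
  constructor <;> nlinarith [jfold_mul_le t, lt_jfold_add_one_mul t]

lemma abs_fold_le_abs (t : ℝ) : |fold t| ≤ |t| := by
  rcases lt_trichotomy (jfold t) 0 with hj | hj | hj
  · have hj' : (jfold t : ℝ) ≤ -1 := by exact_mod_cast Int.le_sub_one_iff.mpr hj
    have ht : π / 4 ≤ -t := by nlinarith [lt_jfold_add_one_mul t, pi_pos]
    exact (abs_fold_le_pi_div_four t).trans (ht.trans (neg_le_abs t))
  · simp [abs_fold, hj]
  · have hj' : (1 : ℝ) ≤ jfold t := by exact_mod_cast hj
    have ht : π / 4 ≤ t := by nlinarith [jfold_mul_le t, pi_pos]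
    exact (abs_fold_le_pi_div_four t).trans (ht.trans (le_abs_self t))

lemma T0_apply_two_pos (a b : ℝ) {z : ℝ} (hz : 0 < z) : 0 < T0 a b z 2 := by
  have hsh : 0 < sinh z := sinh_pos_iff.mpr hz
  unfold T0
  split_ifs
  · simpa [tanh_eq_sinh_div_cosh] using div_pos hsh (cosh_pos z)
  · exact div_pos (mul_pos hsh (cosh_pos z)) (by positivity)

lemma rho_T0_le {a b z : ℝ} (ha : |a| ≤ π / 4) (hb : |b| ≤ π / 4) (hz : 0 < z) :
    rho (T0 a b z) ≤ sin (max |a| |b|) / sinh z := by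
  have hsh : 0 < sinh z := sinh_pos_iff.mpr hz
  unfold T0
  split_ifs with h
  · simp [rho, h.1, h.2]
  set M := Mxy a b
  set r := √(a ^ 2 + b ^ 2)
  set D := cos M ^ 2 + sinh z ^ 2
  have hM₀ : 0 ≤ M := le_max_of_le_left (abs_nonneg a)
  have hMpi : M ≤ π / 4 := max_le ha hb
  have hcos : 0 ≤ cos M := cos_nonneg_of_mem_Icc ⟨by linarith [pi_pos], by linarith⟩
  have hsin : 0 ≤ sin M := sin_nonneg_of_nonneg_of_le_pi hM₀ (by linarith [pi_pos])
  have hr : 0 < r := sqrt_pos.mpr (by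
    rcases not_and_or.mp h with (h' : a ≠ 0) | (h' : b ≠ 0) <;> positivity)
  have hD : 0 < D := by positivity
  have hbound : ∀ u, |u| ≤ r → |u * cos M * sin M / (r * D)| ≤ sin M * cosh z / D := by
    intro u hu
    rw [abs_div, abs_mul, abs_mul, abs_of_nonneg hcos, abs_of_nonneg hsin,
      abs_of_pos (mul_pos hr hD), div_le_div_iff₀ (mul_pos hr hD) hD]
    have hcosh : |u| * cos M ≤ r * cosh z :=
      mul_le_mul hu ((cos_le_one M).trans (one_le_cosh z)) hcos hr.le
    calc |u| * cos M * sin M * D = (|u| * cos M) * (sin M * D) := by ring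
      _ ≤ (r * cosh z) * (sin M * D) := by gcongr
      _ = sin M * cosh z * (r * D) := by ring
  simp only [rho, mk3_apply_zero, mk3_apply_one, mk3_apply_two]
  rw [div_le_iff₀ (div_pos (mul_pos hsh (cosh_pos z)) hD), show max |a| |b| = M from rfl,
    show sin M / sinh z * (sinh z * cosh z / D) = sin M * cosh z / D by field_simp]
  exact max_le (hbound a (abs_le_sqrt (le_add_of_nonneg_right (sq_nonneg b))))
    (hbound b (abs_le_sqrt (le_add_of_nonneg_left (sq_nonneg a))))

lemma Tmap_eq_smul_T0 {v : R3} (hw : T0 (fold (v 0)) (fold (v 1)) (v 2) ≠ 0) :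
    ∃ c : ℝ, 0 < c ∧ Tmap v = ↑(c • T0 (fold (v 0)) (fold (v 1)) (v 2)) := by
  dsimp only [Tmap]
  split_ifs
  · exact ⟨1, one_pos, by rw [one_smul]⟩
  · exact ⟨_, inv_pos.mpr (pow_pos (norm_pos_iff.mpr hw) 2), rfl⟩

/-- the quantity ρ(x,y,z) = max(|x|,|y|)/z strictly decreases under T_λ on
the upper half-space off the z-axis: if z > 0 and max(|x|,|y|) ≠ 0, then T_λ(x,y,z) is
a finite point (u,v,w) with w > 0 and max(|u|,|v|)/w < max(|x|,|y|)/z. -/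
theorem statement9 (l x y z : ℝ) (hl : 0 < l) (hz : 0 < z) (hM : max |x| |y| ≠ 0) :
    ∃ w : R3, Tl l (mk3 x y z) = ↑w ∧ 0 < w 2 ∧
      max |w 0| |w 1| / w 2 < max |x| |y| / z := by
  set w₀ := T0 (fold x) (fold y) z
  have hw₀ : 0 < w₀ 2 := T0_apply_two_pos _ _ hz
  have hw₀ne : w₀ ≠ 0 := fun h ↦ hw₀.ne' (by rw [h]; rfl)
  obtain ⟨c, hc, hT⟩ := Tmap_eq_smul_T0 (v := mk3 x y z) (by simpa using hw₀ne)
  simp only [mk3_apply_zero, mk3_apply_one, mk3_apply_two] at hT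
  have hlc : 0 < l * c := mul_pos hl hc
  refine ⟨(l * c) • w₀, by rw [Tl, hT, mul_smul]; rfl, mul_pos hlc hw₀, ?_⟩
  have hM₀ : 0 < max |x| |y| := lt_of_le_of_ne (by positivity) (Ne.symm hM)
  calc rho ((l * c) • w₀) = rho w₀ := rho_smul hlc w₀
    _ ≤ sin (max |fold x| |fold y|) / sinh z :=
        rho_T0_le (abs_fold_le_pi_div_four x) (abs_fold_le_pi_div_four y) hz
    _ ≤ max |x| |y| / sinh z := by
        gcongr
        exact (sin_le (by positivity)).trans (max_le_max (abs_fold_le_abs x) (abs_fold_le_abs y))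
    _ < max |x| |y| / z := div_lt_div_of_pos_left hM₀ hz (self_lt_sinh_iff.mpr hz)
end
end

section
/- For every λ with 0<λ<√2, the set Q = Q₁∪Q₂ is contained in the basin of attraction A((0,0,0)) of the fixed point (0,0,0) of T_λ. -/
noncomputable section

open Real Filter Topology Set MeasureTheory
open scoped Classical OnePoint

/-- The basin of attraction A(x₀) of a fixed point x₀ of T_λ: points whose orbit is
defined for all time and converges to x₀. -/
def basin (l : ℝ) (x0 : R3) : Set R3 :=
  {x | (∀ k : ℕ, (TlHat l)^[k] ↑x ≠ ∞) ∧
    ∀ ε > (0 : ℝ), ∃ N : ℕ, ∀ k ≥ N, ∀ w : R3, (TlHat l)^[k] ↑x = ↑w → ‖w - x0‖ < ε}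

/-! On the lines `ℝ·(1, α, 0)` and `ℝ·(α, 1, 0)` with `|α| ≤ 1`, inside the beam `|t| < π/4`,
`T_λ` acts as the one-dimensional map `f t = μ tan t` with `μ = λ / √(1 + α²) < 1`. For
`0 < t < φ(μ)` we have `0 ≤ f t < t`: this holds for small `t`, where `cos t > μ` and
`sin t ≤ t`, and a crossing further out would be a fixed point below `φ(μ)`. Hence orbits in
`[0, φ(μ))` decrease to a fixed point of `f` there, which can only be `0`; `f` is odd, so negative
starting points behave the same way. -/

section MulTan

variable {μ φ : ℝ}

lemma mul_tan_lt_self_of_lt_arccos (hμ : 0 < μ) {s : ℝ} (hs0 : 0 < s) (hs : s < arccos μ) :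
    μ * tan s < s := by
  have hcos : μ < cos s := by
    have hμ1 : μ ≤ 1 := by
      by_contra! h
      rw [arccos_eq_zero.mpr h.le] at hs
      linarith
    calc μ = cos (arccos μ) := (cos_arccos (by linarith) hμ1).symm
      _ < cos s := cos_lt_cos_of_nonneg_of_le_pi hs0.le (arccos_le_pi μ) hs
  rw [tan_eq_sin_div_cos, mul_div_assoc', div_lt_iff₀ (hμ.trans hcos)]
  calc μ * sin s ≤ μ * s := mul_le_mul_of_nonneg_left (sin_le hs0.le) hμ.le
    _ < s * cos s := by nlinarith

lemma exists_mul_tan_eq_self (hμ0 : 0 < μ) (hμ1 : μ < 1) {t : ℝ} (ht0 : 0 < t)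
    (htπ : t < π / 2) (ht : t ≤ μ * tan t) : ∃ s, 0 < s ∧ s ≤ t ∧ μ * tan s = s := by
  obtain ⟨r, hr_def⟩ : ∃ r, r = min t (arccos μ) / 2 := ⟨_, rfl⟩
  have hr0 : 0 < r := by have := arccos_pos.mpr hμ1; rw [hr_def]; positivity
  have hrt : r < t := by linarith [min_le_left t (arccos μ)]
  have hr : μ * tan r < r :=
    mul_tan_lt_self_of_lt_arccos hμ0 hr0 (by linarith [min_le_right t (arccos μ)])
  have hcont : ContinuousOn (fun s => μ * tan s - s) (Icc r t) := by
    refine (continuousOn_const.mul (continuousOn_tan.mono fun s hs => ?_)).sub continuousOn_id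
    exact (cos_pos_of_mem_Ioo ⟨by linarith [hs.1], by linarith [hs.2]⟩).ne'
  obtain ⟨s, hs, hs_eq⟩ :=
    intermediate_value_Icc hrt.le hcont (show (0 : ℝ) ∈ Icc _ _ from ⟨by linarith, by linarith⟩)
  exact ⟨s, by linarith [hs.1], hs.2, by linarith [hs_eq]⟩

variable (hμ0 : 0 < μ) (hμ1 : μ < 1) (hφ : ∀ s, 0 < s → s = μ * tan s → φ ≤ s)
include hμ0 hμ1 hφ

lemma mul_tan_lt_self {t : ℝ} (ht0 : 0 < t) (htπ : t < π / 2) (htφ : t < φ) :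
    μ * tan t < t := by
  by_contra! ht
  obtain ⟨s, hs0, hst, hs_eq⟩ := exists_mul_tan_eq_self hμ0 hμ1 ht0 htπ ht
  linarith [hφ s hs0 hs_eq.symm]

lemma mapsTo_mul_tan_Icc {t : ℝ} (htπ : t < π / 2) (htφ : t < φ) :
    MapsTo (fun s => μ * tan s) (Icc 0 t) (Icc 0 t) := by
  intro s ⟨hs0, hst⟩
  have htan : 0 ≤ tan s := tan_nonneg_of_nonneg_of_le_pi_div_two hs0 (by linarith)
  refine ⟨by positivity, ?_⟩
  rcases hs0.eq_or_lt with rfl | hs0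
  · simpa using hst
  · linarith [mul_tan_lt_self hμ0 hμ1 hφ hs0 (by linarith) (by linarith)]

lemma tendsto_iterate_mul_tan_of_nonneg {t : ℝ} (ht0 : 0 ≤ t) (htπ : t < π / 2) (htφ : t < φ) :
    (∀ k, (fun s => μ * tan s)^[k] t ∈ Icc 0 t) ∧
      Tendsto (fun k => (fun s => μ * tan s)^[k] t) atTop (𝓝 0) := by
  set f : ℝ → ℝ := fun s => μ * tan s
  have hmem (k : ℕ) : f^[k] t ∈ Icc 0 t :=
    (mapsTo_mul_tan_Icc hμ0 hμ1 hφ htπ htφ).iterate k ⟨ht0, le_rfl⟩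
  refine ⟨hmem, ?_⟩
  have hanti : Antitone fun k => f^[k] t := antitone_nat_of_succ_le fun k => by
    rw [Function.iterate_succ_apply']
    exact (mapsTo_mul_tan_Icc hμ0 hμ1 hφ ((hmem k).2.trans_lt htπ) ((hmem k).2.trans_lt htφ))
      ⟨(hmem k).1, le_rfl⟩ |>.2
  set L := ⨅ k, f^[k] t
  have hlim : Tendsto (fun k => f^[k] t) atTop (𝓝 L) :=
    tendsto_atTop_ciInf hanti ⟨0, by rintro _ ⟨k, rfl⟩; exact (hmem k).1⟩
  have hL : L ∈ Icc 0 t := isClosed_Icc.mem_of_tendsto hlim (Eventually.of_forall hmem)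
  have hfix : L = μ * tan L := by
    refine (isFixedPt_of_tendsto_iterate hlim ?_).symm
    refine continuousAt_const.mul (continuousAt_tan.mpr (cos_pos_of_mem_Ioo ⟨?_, ?_⟩).ne')
    · linarith [hL.1, pi_pos]
    · linarith [hL.2]
  suffices L = 0 from this ▸ hlim
  by_contra hL0
  linarith [hφ L (lt_of_le_of_ne hL.1 (Ne.symm hL0)) hfix, hL.2]

lemma tendsto_iterate_mul_tan {t : ℝ} (htπ : |t| < π / 2) (htφ : |t| < φ) :
    (∀ k, |(fun s => μ * tan s)^[k] t| ≤ |t|) ∧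
      Tendsto (fun k => (fun s => μ * tan s)^[k] t) atTop (𝓝 0) := by
  set f : ℝ → ℝ := fun s => μ * tan s
  obtain ⟨hmem, hlim⟩ :=
    tendsto_iterate_mul_tan_of_nonneg hμ0 hμ1 hφ (abs_nonneg t) htπ htφ
  have hodd : Function.Semiconj Neg.neg f f := fun s => by simp [f, tan_neg]
  have habs (k : ℕ) : |f^[k] t| = f^[k] |t| := by
    rcases abs_cases t with ⟨ht, -⟩ | ⟨ht, -⟩
    · rw [ht, abs_of_nonneg (ht ▸ hmem k).1]
    · have hneg : 0 ≤ -f^[k] t := hodd.iterate_right k t ▸ ht ▸ (hmem k).1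
      rw [ht, ← hodd.iterate_right k t, abs_of_nonpos (neg_nonneg.mp hneg)]
  refine ⟨fun k => habs k ▸ (hmem k).2, ?_⟩
  rw [tendsto_zero_iff_abs_tendsto_zero]
  exact hlim.congr fun k => (habs k).symm

end MulTan

lemma mk3_zero : mk3 0 0 0 = 0 := by
  ext i; fin_cases i <;> rfl

lemma smul_mk3 (c x y z : ℝ) : c • mk3 x y z = mk3 (c * x) (c * y) (c * z) := by
  ext i; fin_cases i <;> rfl

lemma jfold_eq_zero {t : ℝ} (ht : |t| < π / 4) : jfold t = 0 := by
  obtain ⟨h₁, h₂⟩ := abs_lt.mp ht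
  rw [jfold, Int.floor_eq_zero_iff, Set.mem_Ico, le_div_iff₀ (by positivity),
    div_lt_one (by positivity)]
  constructor <;> linarith

lemma fold_eq_self {t : ℝ} (ht : |t| < π / 4) : fold t = t := by
  simp [fold, jfold_eq_zero ht]

lemma Tmap_mk3 {x y : ℝ} (hx : |x| < π / 4) (hy : |y| < π / 4) (z : ℝ) :
    Tmap (mk3 x y z) = T0 x y z := by
  simp [Tmap, mk3, jfold_eq_zero hx, jfold_eq_zero hy, fold_eq_self hx, fold_eq_self hy]

lemma mul_sin_abs (t : ℝ) : t * sin |t| = |t| * sin t := by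
  rcases abs_cases t with ⟨h, -⟩ | ⟨h, -⟩ <;> rw [h]
  rw [sin_neg]; ring

lemma T0_mul_mul {a b t : ℝ} (hab : max |a| |b| = 1) (ht : cos t ≠ 0) :
    T0 (t * a) (t * b) 0 = (tan t / √(a ^ 2 + b ^ 2)) • mk3 a b 0 := by
  rcases eq_or_ne t 0 with rfl | ht0
  · simp [T0, mk3_zero]
  have hM : Mxy (t * a) (t * b) = |t| := by
    rw [Mxy, abs_mul, abs_mul, ← mul_max_of_nonneg _ _ (abs_nonneg t), hab, mul_one]
  have hnorm : √((t * a) ^ 2 + (t * b) ^ 2) = |t| * √(a ^ 2 + b ^ 2) := by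
    rw [← sqrt_sq_eq_abs, ← sqrt_mul (sq_nonneg t)]; ring_nf
  have hab_ne : a ≠ 0 ∨ b ≠ 0 := by
    by_contra! h
    simp [h.1, h.2] at hab
  have hab0 : 0 < √(a ^ 2 + b ^ 2) := by
    apply sqrt_pos.mpr; rcases hab_ne with h | h <;> positivity
  have habs : |t| ≠ 0 := abs_ne_zero.mpr ht0
  rw [T0, if_neg (by simpa [ht0, or_iff_not_imp_left] using hab_ne), hM, hnorm, cos_abs,
    sinh_zero, smul_mk3, tan_eq_sin_div_cos]
  congr 1 <;> field_simp
  · linear_combination a * cos t ^ 2 * mul_sin_abs t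
  · linear_combination b * cos t ^ 2 * mul_sin_abs t
  · simp

lemma Tl_smul_mk3 (l : ℝ) {a b t : ℝ} (hab : max |a| |b| = 1) (ht : |t| < π / 4) :
    Tl l (t • mk3 a b 0) = ((l / √(a ^ 2 + b ^ 2) * tan t) • mk3 a b 0 : R3) := by
  have hcoord {c : ℝ} (hc : |c| ≤ 1) : |t * c| < π / 4 := by
    rw [abs_mul]; nlinarith [abs_nonneg t]
  have hcos : cos t ≠ 0 :=
    (cos_pos_of_mem_Ioo (abs_lt.mp (ht.trans (by linarith [pi_pos])))).ne'
  rw [smul_mk3, mul_zero, Tl, Tmap_mk3 (hcoord (hab ▸ le_max_left _ _))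
    (hcoord (hab ▸ le_max_right _ _)), T0_mul_mul hab hcos]
  change ((l • _ : R3) : OnePoint R3) = _
  rw [smul_smul]
  ring_nf

lemma mem_basin_of_orbit {l : ℝ} {x0 : R3} (g : ℕ → R3) (hg : ∀ k, Tl l (g k) = g (k + 1))
    (hlim : Tendsto g atTop (𝓝 x0)) : g 0 ∈ basin l x0 := by
  have horbit (k : ℕ) : (TlHat l)^[k] (g 0) = g k := by
    induction k with
    | zero => rfl
    | succ k ih => rw [Function.iterate_succ_apply', ih]; exact hg k
  refine ⟨fun k => horbit k ▸ OnePoint.coe_ne_infty _, fun ε hε => ?_⟩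
  obtain ⟨N, hN⟩ := Metric.tendsto_atTop.mp hlim ε hε
  refine ⟨N, fun k hk w hw => ?_⟩
  rw [horbit k] at hw
  cases OnePoint.coe_injective hw
  exact dist_eq_norm (g k) x0 ▸ hN k hk

lemma smul_mem_basin_zero {l a b μ φ t : ℝ} (hab : max |a| |b| = 1)
    (hμ : l / √(a ^ 2 + b ^ 2) = μ) (hμ0 : 0 < μ) (hμ1 : μ < 1)
    (hφ : ∀ s, 0 < s → s = μ * tan s → φ ≤ s) (ht : |t| < π / 4) (htφ : |t| < φ) :
    t • mk3 a b 0 ∈ basin l (mk3 0 0 0) := by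
  obtain ⟨hbound, hlim⟩ :=
    tendsto_iterate_mul_tan hμ0 hμ1 hφ (ht.trans (by linarith [pi_pos])) htφ
  have hg := mem_basin_of_orbit (l := l) (fun k => (fun s => μ * tan s)^[k] t • mk3 a b 0)
    (fun k => by
      rw [Tl_smul_mk3 l hab ((hbound k).trans_lt ht), hμ, Function.iterate_succ_apply'])
    (by simpa [mk3_zero] using hlim.smul_const (mk3 a b 0))
  simpa [mk3_zero] using hg

theorem statement17_general (l : ℝ) (h0 : 0 < l)
    (phi : ℝ → ℝ)
    (hphi : ∀ μ : ℝ, 0 < μ → μ < 1 →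
      0 < phi μ ∧ phi μ < Real.pi / 2 ∧ phi μ = μ * Real.tan (phi μ) ∧
      ∀ x : ℝ, 0 < x → x = μ * Real.tan x → phi μ ≤ x) :
    ({v : R3 | ∃ α x : ℝ, l ^ 2 - 1 < α ^ 2 ∧ α ^ 2 ≤ 1 ∧
        |x| < min (Real.pi / 4) (phi (l / Real.sqrt (1 + α ^ 2))) ∧
        v = mk3 x (α * x) 0} ∪
      {v : R3 | ∃ α y : ℝ, l ^ 2 - 1 < α ^ 2 ∧ α ^ 2 ≤ 1 ∧
        |y| < min (Real.pi / 4) (phi (l / Real.sqrt (1 + α ^ 2))) ∧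
        v = mk3 (α * y) y 0}) ⊆ basin l (mk3 0 0 0) := by
  have hline {α t : ℝ} (hαl : l ^ 2 - 1 < α ^ 2) {a b : ℝ}
      (hab : max |a| |b| = 1) (hsq : a ^ 2 + b ^ 2 = 1 + α ^ 2)
      (ht : |t| < min (π / 4) (phi (l / √(1 + α ^ 2)))) :
      t • mk3 a b 0 ∈ basin l (mk3 0 0 0) := by
    have hsqrt : 0 < √(1 + α ^ 2) := sqrt_pos.mpr (by positivity)
    have hμ0 : 0 < l / √(1 + α ^ 2) := div_pos h0 hsqrt
    have hμ1 : l / √(1 + α ^ 2) < 1 := by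
      rw [div_lt_one hsqrt]; exact (lt_sqrt h0.le).mpr (by linarith)
    exact smul_mem_basin_zero hab (by rw [hsq]) hμ0 hμ1 (hphi _ hμ0 hμ1).2.2.2
      (lt_min_iff.mp ht).1 (lt_min_iff.mp ht).2
  rintro v (⟨α, x, hαl, hα1, hx, rfl⟩ | ⟨α, y, hαl, hα1, hy, rfl⟩)
  · simpa [smul_mk3, mul_comm] using
      hline hαl (by simpa using (sq_le_one_iff_abs_le_one α).mp hα1) (by ring) hx (a := 1) (b := α)
  · simpa [smul_mk3, mul_comm] using
      hline hαl (by simpa using (sq_le_one_iff_abs_le_one α).mp hα1) (by ring) hy (a := α) (b := 1)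

/-- for 0 < λ < √2, the set Q = Q₁ ∪ Q₂ is contained in the basin of
attraction of the origin. Here φ(μ) ∈ (0,π/2) is the smallest positive solution of
x = μ·tan x (for 0 < μ < 1), given as a hypothesis. -/
theorem statement17 (l : ℝ) (h0 : 0 < l) (h2 : l < Real.sqrt 2)
    (phi : ℝ → ℝ)
    (hphi : ∀ μ : ℝ, 0 < μ → μ < 1 →
      0 < phi μ ∧ phi μ < Real.pi / 2 ∧ phi μ = μ * Real.tan (phi μ) ∧
      ∀ x : ℝ, 0 < x → x = μ * Real.tan x → phi μ ≤ x) :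
    ({v : R3 | ∃ α x : ℝ, l ^ 2 - 1 < α ^ 2 ∧ α ^ 2 ≤ 1 ∧
        |x| < min (Real.pi / 4) (phi (l / Real.sqrt (1 + α ^ 2))) ∧
        v = mk3 x (α * x) 0} ∪
      {v : R3 | ∃ α y : ℝ, l ^ 2 - 1 < α ^ 2 ∧ α ^ 2 ≤ 1 ∧
        |y| < min (Real.pi / 4) (phi (l / Real.sqrt (1 + α ^ 2))) ∧
        v = mk3 (α * y) y 0}) ⊆ basin l (mk3 0 0 0) :=
  statement17_general l h0 phi hphi
end
end
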